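/- G has exponential word growth: for every natural number n, the ball of radius n in G with respect to the generating set {a, a⁻¹, b, b⁻¹} (the set of elements of G expressible as a product of at most n of these letters) contains at least 2ⁿ elements. -/

import Mathlib

-- The generators `a` and `b` of the iterated monodromy group of `z^2-1`,
-- as functions on binary words (`false` = x = left, `true` = y = right),
-- defined by mutual recursion.
mutual
def aFun : List Bool → List Bool
  | [] => []
  | false :: w => true :: bFun w
  | true :: w => false :: w

def bFun : List Bool → List Bool
  | [] => []
  | false :: w => false :: aFun w
  | true :: w => true :: w
end

-- The inverses of `aFun`/`bFun`.
mutual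
def aInv : List Bool → List Bool
  | [] => []
  | true :: w => false :: bInv w
  | false :: w => true :: w

def bInv : List Bool → List Bool
  | [] => []
  | false :: w => false :: aInv w
  | true :: w => true :: w
end

mutual
theorem aFun_aInv : ∀ w, aFun (aInv w) = w
  | [] => rfl
  | true :: w => by simp [aInv, aFun, bFun_bInv w]
  | false :: w => by simp [aInv, aFun]

theorem bFun_bInv : ∀ w, bFun (bInv w) = w
  | [] => rfl
  | false :: w => by simp [bInv, bFun, aFun_aInv w]
  | true :: w => by simp [bInv, bFun]
end

mutual
theorem aInv_aFun : ∀ w, aInv (aFun w) = w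
  | [] => rfl
  | false :: w => by simp [aFun, aInv, bInv_bFun w]
  | true :: w => by simp [aFun, aInv]

theorem bInv_bFun : ∀ w, bInv (bFun w) = w
  | [] => rfl
  | false :: w => by simp [bFun, bInv, aInv_aFun w]
  | true :: w => by simp [bFun, bInv]
end

/-- `a` as a permutation of the set of binary words. -/
def aPerm : Equiv.Perm (List Bool) := ⟨aFun, aInv, aInv_aFun, aFun_aInv⟩
/-- `b` as a permutation of the set of binary words. -/
def bPerm : Equiv.Perm (List Bool) := ⟨bFun, bInv, bInv_bFun, bFun_bInv⟩

mutual
theorem aFun_length : ∀ w, (aFun w).length = w.length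
  | [] => rfl
  | false :: w => by simp [aFun, bFun_length w]
  | true :: w => by simp [aFun]

theorem bFun_length : ∀ w, (bFun w).length = w.length
  | [] => rfl
  | false :: w => by simp [bFun, aFun_length w]
  | true :: w => by simp [bFun]
end

mutual
theorem aFun_prefix : ∀ u v, u <+: v → aFun u <+: aFun v
  | [], v, _ => by simp [aFun]
  | false :: u, false :: v, h => by
      simp only [List.cons_prefix_cons] at h
      simpa [aFun, List.cons_prefix_cons] using bFun_prefix u v h.2
  | true :: u, true :: v, h => by
      simp only [List.cons_prefix_cons] at h
      simpa [aFun, List.cons_prefix_cons] using h.2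
  | false :: u, true :: v, h => by simp [List.cons_prefix_cons] at h
  | true :: u, false :: v, h => by simp [List.cons_prefix_cons] at h
  | _ :: u, [], h => by simp at h

theorem bFun_prefix : ∀ u v, u <+: v → bFun u <+: bFun v
  | [], v, _ => by simp [bFun]
  | false :: u, false :: v, h => by
      simp only [List.cons_prefix_cons] at h
      simpa [bFun, List.cons_prefix_cons] using aFun_prefix u v h.2
  | true :: u, true :: v, h => by
      simp only [List.cons_prefix_cons] at h
      simpa [bFun, List.cons_prefix_cons] using h.2
  | false :: u, true :: v, h => by simp [List.cons_prefix_cons] at h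
  | true :: u, false :: v, h => by simp [List.cons_prefix_cons] at h
  | _ :: u, [], h => by simp at h
end

/-- The group of automorphisms of the binary rooted tree: bijections of the set of
binary words preserving word length and the prefix relation. -/
def treeAut : Subgroup (Equiv.Perm (List Bool)) where
  carrier := {f | (∀ w, (f w).length = w.length) ∧ ∀ u v : List Bool, u <+: v → f u <+: f v}
  one_mem' := ⟨fun _ => rfl, fun _ _ h => h⟩
  mul_mem' := by
    rintro f g ⟨hf1, hf2⟩ ⟨hg1, hg2⟩
    exact ⟨fun w => (hf1 _).trans (hg1 w), fun u v h => hf2 _ _ (hg2 _ _ h)⟩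
  inv_mem' := by
    rintro f ⟨hf1, hf2⟩
    constructor
    · intro w
      have := hf1 (f⁻¹ w)
      simpa using this.symm
    · intro u v h
      have hlen : (f⁻¹ u).length ≤ (f⁻¹ v).length := by
        have h1 : (f⁻¹ u).length = u.length := by have := hf1 (f⁻¹ u); simpa using this.symm
        have h2 : (f⁻¹ v).length = v.length := by have := hf1 (f⁻¹ v); simpa using this.symm
        rw [h1, h2]; exact h.length_le
      set p := (f⁻¹ v).take (f⁻¹ u).length with hp
      have hpv : p <+: f⁻¹ v := List.take_prefix _ _
      have hplen : p.length = (f⁻¹ u).length := by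
        rw [hp, List.length_take]; exact Nat.min_eq_left hlen
      have hfp : f p <+: v := by
        have := hf2 _ _ hpv
        simpa using this
      have hfplen : (f p).length = u.length := by
        rw [hf1 p, hplen]
        have := hf1 (f⁻¹ u); simpa using this.symm
      have : f p = u := by
        rcases List.prefix_or_prefix_of_prefix hfp h with h' | h'
        · exact h'.eq_of_length hfplen
        · exact (h'.eq_of_length hfplen.symm).symm
      have : p = f⁻¹ u := by
        have := congrArg (f⁻¹ : Equiv.Perm (List Bool)) this
        simpa using this
      rw [← this]; exact hpv

/-- The generator `a` as a tree automorphism. -/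
def A : treeAut := ⟨aPerm, aFun_length, aFun_prefix⟩
/-- The generator `b` as a tree automorphism. -/
def B : treeAut := ⟨bPerm, bFun_length, bFun_prefix⟩

/-- The iterated monodromy group of `z ↦ z² - 1`: the subgroup of the automorphism
group of the binary rooted tree generated by `a` and `b`. -/
def G : Subgroup treeAut := Subgroup.closure {A, B}

/-- Apply a tree automorphism to a binary word. -/
def app (g : treeAut) (w : List Bool) : List Bool := g.val w


/-! ### Freeness of the monoid generated by `a` and `b` -/

/-- Apply a word over the alphabet `{a, b}` (`false` = a, `true` = b) to a tree word. -/
def Ffun : List Bool → List Bool → List Bool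
  | [], w => w
  | false :: u, w => aFun (Ffun u w)
  | true :: u, w => bFun (Ffun u w)

/-- The root permutation parity of a word: `true` iff it contains an odd number of `a`s. -/
def parw : List Bool → Bool
  | [] => false
  | false :: u => !(parw u)
  | true :: u => parw u

/-- The section of a word at the vertex `c`. -/
def secw (c : Bool) : List Bool → List Bool
  | [] => []
  | l :: u => if Bool.xor c (parw u) = true then secw c u else (!l) :: secw c u

theorem Ffun_nil : ∀ u, Ffun u [] = []
  | [] => rfl
  | false :: u => by simp [Ffun, Ffun_nil u, aFun]
  | true :: u => by simp [Ffun, Ffun_nil u, bFun]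

theorem Ffun_cons : ∀ (u : List Bool) (c : Bool) (w),
    Ffun u (c :: w) = (Bool.xor c (parw u)) :: Ffun (secw c u) w := by
  intro u
  induction u with
  | nil => intro c w; simp [Ffun, parw, secw]
  | cons l u ih =>
    intro c w
    cases l <;> cases c <;> cases hp : parw u <;>
      simp [Ffun, ih, parw, secw, hp, aFun, bFun]

theorem sec_len : ∀ u, (secw false u).length + (secw true u).length = u.length := by
  intro u
  induction u with
  | nil => rfl
  | cons l u ih => cases hp : parw u <;> simp [secw, hp] <;> omega

theorem secF_nil : ∀ u, secw false u = [] → u = [] := by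
  intro u
  induction u with
  | nil => intro _; rfl
  | cons l u ih =>
    intro h
    cases hp : parw u <;> simp [secw, hp] at h
    have := ih h
    subst this
    simp [parw] at hp

theorem par_eq {u v : List Bool} (h : ∀ w, Ffun u w = Ffun v w) : parw u = parw v := by
  have := h [false]
  rw [Ffun_cons, Ffun_cons] at this
  simp at this
  exact this.1

theorem sec_eq {u v : List Bool} (h : ∀ w, Ffun u w = Ffun v w) (c : Bool) :
    ∀ w, Ffun (secw c u) w = Ffun (secw c v) w := by
  intro w
  have := h (c :: w)
  rw [Ffun_cons, Ffun_cons] at this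
  exact (List.cons.injEq _ _ _ _ ▸ this).2

theorem parw_append : ∀ (u : List Bool) (l : Bool),
    parw (u ++ [l]) = Bool.xor (parw u) (!l) := by
  intro u l
  induction u with
  | nil => cases l <;> simp [parw]
  | cons x u ih => cases x <;> cases l <;> cases hp : parw u <;>
      simp_all [parw]

theorem secw_append : ∀ (u : List Bool) (c l : Bool),
    secw c (u ++ [l]) = secw (Bool.xor c (!l)) u ++ (if c then [] else [!l]) := by
  intro u
  induction u with
  | nil => intro c l; cases c <;> cases l <;> simp [secw, parw]
  | cons x u ih =>
    intro c l
    cases c <;> cases l <;> cases hp : parw u <;>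
      simp [secw, parw_append, hp, ih]

theorem secF_app (u : List Bool) (l : Bool) :
    secw false (u ++ [l]) = secw (!l) u ++ [!l] := by
  rw [secw_append]; simp

theorem secT_app (u : List Bool) (l : Bool) :
    secw true (u ++ [l]) = secw l u := by
  rw [secw_append]; cases l <;> simp

theorem unsec : ∀ u v : List Bool,
    secw false u = secw false v → secw true u = secw true v → u = v := by
  intro u
  induction u using List.reverseRecOn with
  | nil =>
    intro v h1 _
    rcases v.eq_nil_or_concat with rfl | ⟨v', m, rfl⟩
    · rfl
    · rw [List.concat_eq_append, secF_app] at h1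
      simp [secw] at h1
  | append_singleton u' l ih =>
    intro v h1 h2
    rcases v.eq_nil_or_concat with rfl | ⟨v', m, rfl⟩
    · rw [secF_app] at h1
      simp [secw] at h1
    · rw [List.concat_eq_append] at h1 h2 ⊢
      rw [secF_app, secF_app] at h1
      rw [secT_app, secT_app] at h2
      have hlm : secw (!l) u' = secw (!m) v' ∧ [!l] = [!m] :=
        List.append_inj' h1 rfl
      have hl : l = m := by
        have := hlm.2
        cases l <;> cases m <;> simp_all
      subst hl
      cases l
      · exact congrArg (· ++ [false]) (ih v' h2 hlm.1)
      · exact congrArg (· ++ [true]) (ih v' hlm.1 h2)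

theorem parw_repT : ∀ m, parw (List.replicate m true) = false := by
  intro m
  induction m with
  | zero => rfl
  | succ m ih => simpa [List.replicate, parw] using ih

theorem parw_repF : ∀ m, parw (List.replicate m false) = decide (m % 2 = 1) := by
  intro m
  induction m with
  | zero => rfl
  | succ m ih =>
    rw [List.replicate_succ]
    have hstep : parw (false :: List.replicate m false) = !(parw (List.replicate m false)) := rfl
    rw [hstep, ih]
    rcases Nat.mod_two_eq_zero_or_one m with hm | hm
    · have h1 : (m + 1) % 2 = 1 := by omega
      rw [hm, h1]; simp
    · have h1 : (m + 1) % 2 = 0 := by omega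
      rw [hm, h1]; simp

theorem secF_repT : ∀ m, secw false (List.replicate m true) = List.replicate m false := by
  intro m
  induction m with
  | zero => rfl
  | succ m ih => simp [List.replicate, secw, parw_repT, ih]

theorem secT_repF : ∀ m, secw true (List.replicate m false) = List.replicate (m / 2) true := by
  intro m
  induction m with
  | zero => rfl
  | succ m ih =>
    rw [List.replicate_succ]
    rcases Nat.mod_two_eq_zero_or_one m with hm | hm
    · have hcond : Bool.xor true (parw (List.replicate m false)) = true := by
        rw [parw_repF]; simp [hm]
      have h2 : (m + 1) / 2 = m / 2 := by omega
      simp [secw, hcond, ih, h2]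
    · have hcond : Bool.xor true (parw (List.replicate m false)) = false := by
        rw [parw_repF]; simp [hm]
      have h2 : (m + 1) / 2 = m / 2 + 1 := by omega
      simp [secw, hcond, ih, h2, List.replicate_succ]

theorem bpow : ∀ N m m', m + m' ≤ N →
    (∀ w, Ffun (List.replicate m true) w = Ffun (List.replicate m' true) w) → m = m' := by
  intro N
  induction N with
  | zero => intro m m' h _; omega
  | succ N ih =>
    intro m m' hmm h
    have h1 : ∀ w, Ffun (List.replicate m false) w = Ffun (List.replicate m' false) w := by
      have := sec_eq h false; rwa [secF_repT, secF_repT] at this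
    have hp : m % 2 = m' % 2 := by
      have := par_eq h1
      rw [parw_repF, parw_repF] at this
      simp only [decide_eq_decide] at this
      omega
    have h2 : ∀ w, Ffun (List.replicate (m/2) true) w = Ffun (List.replicate (m'/2) true) w := by
      have := sec_eq h1 true; rwa [secT_repF, secT_repF] at this
    by_cases h0 : m = 0 ∧ m' = 0
    · omega
    · have hle : m / 2 + m' / 2 ≤ N := by omega
      have := ih _ _ hle h2
      omega

theorem secT_nil_char : ∀ u, secw true u = [] →
    (∃ m, u = List.replicate m true) ∨ (∃ m, u = false :: List.replicate m true) := by
  intro u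
  induction u with
  | nil => exact fun _ => Or.inl ⟨0, rfl⟩
  | cons l u ih =>
    intro h
    cases hp : parw u <;> simp [secw, hp] at h
    rcases ih h with ⟨m, rfl⟩ | ⟨m, rfl⟩
    · cases l
      · exact Or.inr ⟨m, rfl⟩
      · exact Or.inl ⟨m + 1, rfl⟩
    · exfalso
      simp [parw, parw_repT] at hp

theorem words_inj : ∀ N u v : _, u.length + v.length ≤ N →
    (∀ w, Ffun u w = Ffun v w) → u = v := by
  intro N
  induction N with
  | zero =>
    intro u v hlen _
    have hu : u = [] := List.eq_nil_of_length_eq_zero (by omega)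
    have hv : v = [] := List.eq_nil_of_length_eq_zero (by omega)
    rw [hu, hv]
  | succ N ih =>
    intro u v hlen h
    have hpar := par_eq h
    have hsF := sec_eq h false
    have hsT := sec_eq h true
    have lu := sec_len u
    have lv := sec_len v
    by_cases hT : secw true u = [] ∧ secw true v = []
    · rcases secT_nil_char u hT.1 with ⟨m, rfl⟩ | ⟨m, rfl⟩ <;>
        rcases secT_nil_char v hT.2 with ⟨m', rfl⟩ | ⟨m', rfl⟩
      · rw [bpow (m + m') m m' le_rfl h]
      · exfalso; simp [parw_repT, parw] at hpar
      · exfalso; simp [parw_repT, parw] at hpar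
      · have h' : ∀ w, Ffun (List.replicate m true) w = Ffun (List.replicate m' true) w := by
          intro w
          have hw : aFun (Ffun (List.replicate m true) w)
              = aFun (Ffun (List.replicate m' true) w) := h w
          have := congrArg aInv hw
          rwa [aInv_aFun, aInv_aFun] at this
        rw [bpow (m + m') m m' le_rfl h']
    · have hone : 1 ≤ (secw true u).length + (secw true v).length := by
        rcases not_and_or.mp hT with h1 | h1 <;>
          · have := List.length_pos_iff.mpr h1; omega
      have hltF : (secw false u).length + (secw false v).length ≤ N := by omega
      have hF : secw false u = secw false v := ih _ _ hltF hsF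
      by_cases hu : u = []
      · subst hu
        have : secw false v = [] := hF.symm
        rw [secF_nil v this]
      · by_cases hv : v = []
        · subst hv
          have : secw false u = [] := hF
          rw [secF_nil u this]
        · have h1u : 1 ≤ (secw false u).length := by
            have : secw false u ≠ [] := fun hc => hu (secF_nil u hc)
            have := List.length_pos_iff.mpr this; omega
          have h1v : 1 ≤ (secw false v).length := by
            have : secw false v ≠ [] := fun hc => hv (secF_nil v hc)
            have := List.length_pos_iff.mpr this; omega
          have hltT : (secw true u).length + (secw true v).length ≤ N := by omega
          have hTeq : secw true u = secw true v := ih _ _ hltT hsT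
          exact unsec u v hF hTeq

/-! ### From words to elements of the ball -/

/-- The generator corresponding to a letter. -/
def gen (c : Bool) : treeAut := if c then B else A

theorem app_prod : ∀ (u : List Bool) (w : List Bool),
    (((u.map gen).prod : treeAut) : Equiv.Perm (List Bool)) w = Ffun u w := by
  intro u
  induction u with
  | nil => intro w; rfl
  | cons c u ih =>
    intro w
    rw [List.map_cons, List.prod_cons]
    cases c
    · show aFun ((((u.map gen).prod : treeAut) : Equiv.Perm (List Bool)) w) = aFun (Ffun u w)
      exact congrArg aFun (ih w)
    · show bFun ((((u.map gen).prod : treeAut) : Equiv.Perm (List Bool)) w) = bFun (Ffun u w)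
      exact congrArg bFun (ih w)

/-- `G` has exponential growth: the ball of radius `n` with respect to
the generating set `{a, a⁻¹, b, b⁻¹}` contains at least `2ⁿ` elements. -/
theorem exponential_growth (n : ℕ) :
    2 ^ n ≤ Set.ncard {g : treeAut | ∃ l : List treeAut,
      (∀ s ∈ l, s ∈ ({A, A⁻¹, B, B⁻¹} : Set treeAut)) ∧ l.length ≤ n ∧ l.prod = g} := by
  classical
  set S : Set treeAut := {g : treeAut | ∃ l : List treeAut,
      (∀ s ∈ l, s ∈ ({A, A⁻¹, B, B⁻¹} : Set treeAut)) ∧ l.length ≤ n ∧ l.prod = g} with hS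
  set f : (Fin n → Bool) → treeAut := fun x => ((List.ofFn x).map gen).prod with hf
  have hinj : Function.Injective f := by
    intro x y hxy
    have hfun : ∀ w, Ffun (List.ofFn x) w = Ffun (List.ofFn y) w := by
      intro w
      rw [← app_prod, ← app_prod]
      exact congrArg (fun g : treeAut => (g : Equiv.Perm (List Bool)) w) hxy
    have := words_inj (n + n) _ _ (by simp) hfun
    exact List.ofFn_inj.mp this
  have hsub : Set.range f ⊆ S := by
    rintro _ ⟨x, rfl⟩
    refine ⟨(List.ofFn x).map gen, ?_, by simp, rfl⟩
    intro s hs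
    rw [List.mem_map] at hs
    obtain ⟨c, -, rfl⟩ := hs
    cases c <;> simp [gen]
  have hK : ({A, A⁻¹, B, B⁻¹} : Set treeAut).Finite :=
    (((Set.finite_singleton _).insert _).insert _).insert _
  have : Finite ↥({A, A⁻¹, B, B⁻¹} : Set treeAut) := hK.to_subtype
  have hlists : {l : List ↥({A, A⁻¹, B, B⁻¹} : Set treeAut) | l.length ≤ n}.Finite :=
    List.finite_length_le _ n
  have hSfin : S.Finite := by
    refine Set.Finite.subset (hlists.image
      (fun l : List ↥({A, A⁻¹, B, B⁻¹} : Set treeAut) => (l.map Subtype.val).prod)) ?_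
    rintro g ⟨l, hmem, hlen, rfl⟩
    refine ⟨l.attach.map (fun x => (⟨x.1, hmem x.1 x.2⟩ :
      ↥({A, A⁻¹, B, B⁻¹} : Set treeAut))), by simpa using hlen, ?_⟩
    simp only [List.map_map]
    have : (Subtype.val ∘ fun x : {x // x ∈ l} =>
        (⟨x.1, hmem x.1 x.2⟩ : ↥({A, A⁻¹, B, B⁻¹} : Set treeAut))) = Subtype.val := rfl
    rw [this, List.attach_map_subtype_val]
  calc (2 : ℕ) ^ n = Nat.card (Fin n → Bool) := by simp
    _ = (Set.range f).ncard := by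
        rw [← Nat.card_range_of_injective hinj, Nat.card_coe_set_eq]
    _ ≤ S.ncard := Set.ncard_le_ncard hsub hSfin
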